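/- arXiv:2510.09520 — 2 statements merged into one kernel-verified Lean document; each statement's English description precedes it below -/
import Mathlib

section
/- If a density matrix ρ on N qubits satisfies ⟨G_N|ρ|G_N⟩ > 1/2, then ρ is not a convex combination of product states across any bipartition; i.e., for every nontrivial bipartition (A, B) of the qubits and every separable-across-(A,B) state σ, ⟨G_N|σ|G_N⟩ ≤ 1/2. -/
open Matrix Finset Complex
open scoped Classical

namespace GHZ

abbrev Op (N : ℕ) := Matrix (Fin N → Fin 2) (Fin N → Fin 2) ℂ

/-- all-zeros bitstring -/
def allZeros (N : ℕ) : Fin N → Fin 2 := fun _ => 0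
/-- all-ones bitstring -/
def allOnes (N : ℕ) : Fin N → Fin 2 := fun _ => 1

/-- |x⟩⟨y| -/
noncomputable def ketbra {N : ℕ} (x y : Fin N → Fin 2) : Op N := Matrix.single x y 1

/-- Pauli Z on qubit i -/
noncomputable def Zop {N : ℕ} (i : Fin N) : Op N :=
  Matrix.diagonal fun x => if x i = 0 then 1 else -1

/-- ∏_{i ∈ S} Z_i : the Z-type Pauli operator supported on S -/
noncomputable def ZS {N : ℕ} (S : Finset (Fin N)) : Op N :=
  Matrix.diagonal fun x => ∏ i ∈ S, (if x i = 0 then (1 : ℂ) else -1)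

/-- X^{⊗N} -/
noncomputable def XN (N : ℕ) : Op N :=
  Matrix.of fun x y => if (∀ i, y i = x i + 1) then (1 : ℂ) else 0

def Xmat : Matrix (Fin 2) (Fin 2) ℂ := !![0, 1; 1, 0]
def Ymat : Matrix (Fin 2) (Fin 2) ℂ := !![0, -Complex.I; Complex.I, 0]
def Zmat : Matrix (Fin 2) (Fin 2) ℂ := !![1, 0; 0, -1]

/-- a single-qubit operator M acting on qubit j of an N-qubit register -/
noncomputable def opOn {N : ℕ} (j : Fin N) (M : Matrix (Fin 2) (Fin 2) ℂ) : Op N :=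
  Matrix.of fun x y => if ∀ i, i ≠ j → x i = y i then M (x j) (y j) else 0

/-- the GHZ state vector (|0…0⟩ + |1…1⟩)/√2 -/
noncomputable def ghzVec (N : ℕ) : (Fin N → Fin 2) → ℂ :=
  fun x => if x = allZeros N ∨ x = allOnes N then ((Real.sqrt 2 : ℂ))⁻¹ else 0

/-- coherence operator |0…0⟩⟨1…1| + |1…1⟩⟨0…0| -/
noncomputable def chi (N : ℕ) : Op N :=
  ketbra (allZeros N) (allOnes N) + ketbra (allOnes N) (allZeros N)

/-- population operator |0…0⟩⟨0…0| + |1…1⟩⟨1…1| -/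
noncomputable def popOp (N : ℕ) : Op N :=
  ketbra (allZeros N) (allZeros N) + ketbra (allOnes N) (allOnes N)

/-- M_φ = ∏_j (cos φ X_j + sin φ Y_j) -/
noncomputable def Mop (N : ℕ) (φ : ℝ) : Op N :=
  (List.ofFn fun j : Fin N =>
    opOn j ((Real.cos φ : ℂ) • Xmat + (Real.sin φ : ℂ) • Ymat)).prod

/-- (e^{iφ}|0⟩⟨0| + e^{-iφ}|1⟩⟨1|)^{⊗N} -/
noncomputable def Dop (N : ℕ) (φ : ℝ) : Op N :=
  Matrix.diagonal fun x => ∏ i : Fin N,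
    (if x i = 0 then Complex.exp (Complex.I * φ) else Complex.exp (-Complex.I * φ))

end GHZ

namespace GHZ

/-- a pure state vector on N qubits that is a product across the bipartition (A, Aᶜ) -/
def IsPureProduct {N : ℕ} (A : Finset (Fin N)) (ψ : (Fin N → Fin 2) → ℂ) : Prop :=
  ∃ (a : ({i : Fin N // i ∈ A} → Fin 2) → ℂ) (b : ({i : Fin N // i ∉ A} → Fin 2) → ℂ),
    ∀ x, ψ x = a (fun i => x i.1) * b (fun i => x i.1)

/-- a state that is a convex combination of normalized pure product states across (A, Aᶜ) -/
def SeparableAcross {N : ℕ} (A : Finset (Fin N)) (σ : Op N) : Prop :=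
  ∃ (n : ℕ) (p : Fin n → ℝ) (ψ : Fin n → (Fin N → Fin 2) → ℂ),
    (∀ k, 0 ≤ p k) ∧ (∑ k, p k = 1) ∧
    (∀ k, IsPureProduct A (ψ k)) ∧ (∀ k, star (ψ k) ⬝ᵥ ψ k = 1) ∧
    σ = ∑ k, (p k : ℂ) • Matrix.vecMulVec (ψ k) (star (ψ k))

end GHZ

/-!
The GHZ overlap `⟨G_N|σ|G_N⟩` is affine in `σ`, so it suffices to bound `|⟨G_N|ψ⟩|²` for a
normalized product vector `ψ = a ⊗ b`. Only the amplitudes `ψ(0…0) = a(0)b(0)` and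
`ψ(1…1) = a(1)b(1)` meet `G_N`, so `√2 ⟨G_N|ψ⟩ = a(0)b(0) + a(1)b(1)`. Both sides of the cut
being nonempty, `a(0), a(1)` are distinct entries of `a` and `b(0), b(1)` distinct entries of `b`,
and Cauchy–Schwarz bounds the sum by `‖a‖ ‖b‖ = ‖ψ‖ = 1`.
-/

namespace GHZ

lemma star_dotProduct_self_eq_sum_normSq {α : Type*} [Fintype α] (v : α → ℂ) :
    star v ⬝ᵥ v = ∑ x, (normSq (v x) : ℂ) := by
  simp [dotProduct, ← mul_conj, mul_comm]

lemma star_dotProduct_vecMulVec_mulVec {α : Type*} [Fintype α] (g ψ : α → ℂ) :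
    star g ⬝ᵥ vecMulVec ψ (star ψ) *ᵥ g = (normSq (star g ⬝ᵥ ψ) : ℂ) := by
  rw [vecMulVec_mulVec, dotProduct_smul, star_dotProduct ψ g, ← mul_conj]
  simp

lemma star_dotProduct_sum_smul_vecMulVec_mulVec {α ι : Type*} [Fintype α] [Fintype ι]
    (g : α → ℂ) (p : ι → ℝ) (ψ : ι → α → ℂ) :
    star g ⬝ᵥ (∑ k, (p k : ℂ) • vecMulVec (ψ k) (star (ψ k))) *ᵥ g
      = ∑ k, ((p k * normSq (star g ⬝ᵥ ψ k) : ℝ) : ℂ) := by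
  simp only [sum_mulVec, dotProduct_sum, smul_mulVec, dotProduct_smul,
    star_dotProduct_vecMulVec_mulVec, smul_eq_mul, ofReal_mul]

lemma normSq_mul_add_mul_le (a₀ a₁ b₀ b₁ : ℂ) :
    normSq (a₀ * b₀ + a₁ * b₁) ≤ (normSq a₀ + normSq a₁) * (normSq b₀ + normSq b₁) := by
  simp only [← Complex.sq_norm]
  have htri : ‖a₀ * b₀ + a₁ * b₁‖ ≤ ‖a₀‖ * ‖b₀‖ + ‖a₁‖ * ‖b₁‖ := by
    simpa only [norm_mul] using norm_add_le (a₀ * b₀) (a₁ * b₁)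
  calc ‖a₀ * b₀ + a₁ * b₁‖ ^ 2 ≤ (‖a₀‖ * ‖b₀‖ + ‖a₁‖ * ‖b₁‖) ^ 2 := by gcongr
    _ ≤ _ := by nlinarith [sq_nonneg (‖a₀‖ * ‖b₁‖ - ‖a₁‖ * ‖b₀‖)]

lemma normSq_add_normSq_le_sum {α : Type*} [Fintype α] (f : α → ℂ) {x y : α} (hxy : x ≠ y) :
    normSq (f x) + normSq (f y) ≤ ∑ z, normSq (f z) := by
  classical
  rw [← Finset.sum_pair (f := fun z => normSq (f z)) hxy]
  exact Finset.sum_le_univ_sum_of_nonneg fun z => normSq_nonneg _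

lemma sum_normSq_eq_mul_of_eq_mul {ι κ : Type*} [Fintype ι] [DecidableEq ι] [Fintype κ]
    {A : Finset ι} {ψ : (ι → κ) → ℂ} {a : ({i // i ∈ A} → κ) → ℂ} {b : ({i // i ∉ A} → κ) → ℂ}
    (h : ∀ x, ψ x = a (fun i => x i) * b (fun i => x i)) :
    ∑ x, normSq (ψ x) = (∑ u, normSq (a u)) * ∑ v, normSq (b v) := by
  rw [Finset.sum_mul_sum, ← Fintype.sum_prod_type']
  exact Fintype.sum_equiv (Equiv.piEquivPiSubtypeProd (· ∈ A) fun _ => κ) _ _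
    fun x => by simp [h]

lemma allZeros_ne_allOnes {N : ℕ} (hN : 0 < N) : allZeros N ≠ allOnes N :=
  fun h => zero_ne_one (congrFun h ⟨0, hN⟩)

lemma star_ghzVec_dotProduct {N : ℕ} (hN : 0 < N) (ψ : (Fin N → Fin 2) → ℂ) :
    star (ghzVec N) ⬝ᵥ ψ = (Real.sqrt 2 : ℂ)⁻¹ * (ψ (allZeros N) + ψ (allOnes N)) := by
  rw [dotProduct, Fintype.sum_eq_add _ _ (allZeros_ne_allOnes hN)]
  · simp [ghzVec, mul_add]
  · rintro x ⟨h₀, h₁⟩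
    simp [ghzVec, h₀, h₁]

lemma normSq_star_ghzVec_dotProduct_le_half {N : ℕ} {A : Finset (Fin N)} (hA : A ≠ ∅)
    (hA' : A ≠ univ) {ψ : (Fin N → Fin 2) → ℂ} (hψ : IsPureProduct A ψ)
    (hnorm : star ψ ⬝ᵥ ψ = 1) :
    normSq (star (ghzVec N) ⬝ᵥ ψ) ≤ 1 / 2 := by
  obtain ⟨a, b, hab⟩ := hψ
  obtain ⟨i, hi⟩ := Finset.nonempty_iff_ne_empty.2 hA
  obtain ⟨j, hj⟩ : ∃ j, j ∉ A := by simpa [Finset.eq_univ_iff_forall] using hA'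
  have hu : (fun _ => 0 : {i // i ∈ A} → Fin 2) ≠ fun _ => 1 :=
    fun h => zero_ne_one (congrFun h ⟨i, hi⟩)
  have hv : (fun _ => 0 : {i // i ∉ A} → Fin 2) ≠ fun _ => 1 :=
    fun h => zero_ne_one (congrFun h ⟨j, hj⟩)
  have hψ_one : ∑ x, normSq (ψ x) = 1 := by
    exact_mod_cast (star_dotProduct_self_eq_sum_normSq ψ).symm.trans hnorm
  have hsqrt : normSq (Real.sqrt 2 : ℂ)⁻¹ = 1 / 2 := by
    rw [normSq_inv, normSq_ofReal, Real.mul_self_sqrt zero_le_two, one_div]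
  calc normSq (star (ghzVec N) ⬝ᵥ ψ)
      = 1 / 2 * normSq (a (fun _ => 0) * b (fun _ => 0) + a (fun _ => 1) * b (fun _ => 1)) := by
        rw [star_ghzVec_dotProduct (Fin.pos i), hab, hab, normSq_mul, hsqrt]
        rfl
    _ ≤ 1 / 2 * ((normSq (a fun _ => 0) + normSq (a fun _ => 1)) *
          (normSq (b fun _ => 0) + normSq (b fun _ => 1))) := by
        gcongr
        exact normSq_mul_add_mul_le _ _ _ _
    _ ≤ 1 / 2 * ((∑ u, normSq (a u)) * ∑ v, normSq (b v)) := by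
        gcongr
        · exact add_nonneg (normSq_nonneg _) (normSq_nonneg _)
        · exact Finset.sum_nonneg fun u _ => normSq_nonneg _
        · exact normSq_add_normSq_le_sum a hu
        · exact normSq_add_normSq_le_sum b hv
    _ = 1 / 2 := by rw [← sum_normSq_eq_mul_of_eq_mul hab, hψ_one, mul_one]

lemma re_ghz_overlap_le_half_of_separableAcross {N : ℕ} {A : Finset (Fin N)} (hA : A ≠ ∅)
    (hA' : A ≠ univ) {σ : Op N} (hσ : SeparableAcross A σ) :
    (star (ghzVec N) ⬝ᵥ σ *ᵥ ghzVec N).re ≤ 1 / 2 := by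
  obtain ⟨n, p, ψ, hp_nonneg, hp_sum, hψ_prod, hψ_norm, rfl⟩ := hσ
  rw [star_dotProduct_sum_smul_vecMulVec_mulVec, ← ofReal_sum, ofReal_re]
  calc ∑ k, p k * normSq (star (ghzVec N) ⬝ᵥ ψ k)
      ≤ ∑ k, p k * (1 / 2) := by
        gcongr with k
        · exact hp_nonneg k
        · exact normSq_star_ghzVec_dotProduct_le_half hA hA' (hψ_prod k) (hψ_norm k)
    _ = 1 / 2 := by rw [← Finset.sum_mul, hp_sum, one_mul]

end GHZ

open GHZ in
theorem ghz_overlap_of_separable_le_half_general (N : ℕ)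
    (A : Finset (Fin N)) (hA : A ≠ ∅) (hA' : A ≠ univ) :
    (∀ σ : Op N, SeparableAcross A σ →
        (star (ghzVec N) ⬝ᵥ σ.mulVec (ghzVec N)).re ≤ 1 / 2)
    ∧ ∀ ρ : Op N, 1 / 2 < (star (ghzVec N) ⬝ᵥ ρ.mulVec (ghzVec N)).re →
        ¬ SeparableAcross A ρ := by
  have hsep : ∀ σ : Op N, SeparableAcross A σ →
      (star (ghzVec N) ⬝ᵥ σ.mulVec (ghzVec N)).re ≤ 1 / 2 :=
    fun _ hσ => re_ghz_overlap_le_half_of_separableAcross hA hA' hσ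
  exact ⟨hsep, fun ρ hρ hρ_sep => (hsep ρ hρ_sep).not_gt hρ⟩

open GHZ in
/-- across any nontrivial bipartition (A, Aᶜ), every separable state σ has
GHZ overlap at most 1/2; hence any ρ with ⟨G_N|ρ|G_N⟩ > 1/2 is not separable across any
nontrivial bipartition. -/
theorem ghz_overlap_of_separable_le_half (N : ℕ) (hN : 2 ≤ N)
    (A : Finset (Fin N)) (hA : A ≠ ∅) (hA' : A ≠ univ) :
    (∀ σ : Op N, SeparableAcross A σ →
        (star (ghzVec N) ⬝ᵥ σ.mulVec (ghzVec N)).re ≤ 1 / 2)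
    ∧ ∀ ρ : Op N, 1 / 2 < (star (ghzVec N) ⬝ᵥ ρ.mulVec (ghzVec N)).re →
        ¬ SeparableAcross A ρ :=
  ghz_overlap_of_separable_le_half_general N A hA hA'
end

section
/- For the alternating-sign Fourier reconstruction, χ = I_N + I_{−N} where I_q = (1/(2(N+1))) ∑_{j=0}^{2N+1} e^{iqjπ/(N+1)} M_{jπ/(N+1)}, with M_φ = X^{⊗N}(e^{iφ}|0⟩⟨0| + e^{-iφ}|1⟩⟨1|)^{⊗N} and χ = |0…0⟩⟨1…1| + |1…1⟩⟨0…0|. -/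
open Matrix Finset Complex
open scoped Classical

namespace GHZ

/-- Fourier component I_q of the parity-oscillation signal -/
noncomputable def Iq (N : ℕ) (q : ℤ) : Op N :=
  ((2 * ((N : ℂ) + 1)))⁻¹ • ∑ j ∈ Finset.range (2 * N + 2),
    Complex.exp (Complex.I * q * j * Real.pi / ((N : ℂ) + 1)) •
      (XN N * Dop N (j * Real.pi / ((N : ℝ) + 1)))

end GHZ

/-!
Put ζ = exp(2πi / (2N + 2)) and φ_j = jπ/(N + 1). At a basis state y with m zeros the diagonal
factor of M_{φ_j} = X^{⊗N} D(φ_j) is ζ^{j(2m - N)}, so I_q = X^{⊗N} D_q where D_q is diagonal with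
entries (2N + 2)⁻¹ ∑_j ζ^{j(q + 2m - N)}: by orthogonality of roots of unity this is 1 when
2N + 2 ∣ q + 2m - N and 0 otherwise. As 0 ≤ m ≤ N, for q = N this singles out m = 0 (y = 1…1) and
for q = -N it singles out m = N (y = 0…0), and X^{⊗N} maps these two projectors onto the two
halves of χ.
-/

open scoped Real

theorem IsPrimitiveRoot.geom_sum_zpow {K : Type*} [Field K] {ζ : K} {n : ℕ}
    (hζ : IsPrimitiveRoot ζ n) (k : ℤ) :
    ∑ j ∈ range n, (ζ ^ k) ^ j = if (n : ℤ) ∣ k then (n : K) else 0 := by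
  split_ifs with hk
  · simp [(hζ.zpow_eq_one_iff_dvd k).mpr hk]
  · have hne : ζ ^ k ≠ 1 := fun h => hk ((hζ.zpow_eq_one_iff_dvd k).mp h)
    rw [geom_sum_eq hne, ← zpow_natCast, ← _root_.zpow_mul, mul_comm, _root_.zpow_mul,
      zpow_natCast, hζ.pow_eq_one, _root_.one_zpow, sub_self, zero_div]

theorem Finset.prod_ite_inv_eq_zpow {ι α : Type*} [Fintype ι] [CommGroupWithZero α] {u : α}
    (hu : u ≠ 0) (p : ι → Prop) [DecidablePred p] :
    ∏ i, (if p i then u else u⁻¹) = u ^ (2 * (#{i | p i} : ℤ) - Fintype.card ι) := by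
  rw [prod_ite, prod_const, prod_const, inv_pow, ← zpow_natCast, ← zpow_natCast, ← _root_.zpow_neg,
    ← zpow_add₀ hu]
  have hcard : #{i | p i} + #{i | ¬p i} = Fintype.card ι := by
    rw [card_filter_add_card_filter_not, card_univ]
  congr 1
  omega

namespace GHZ

variable {N : ℕ}

def numZeros (y : Fin N → Fin 2) : ℕ := #{i | y i = 0}

theorem numZeros_le (y : Fin N → Fin 2) : numZeros y ≤ N :=
  (card_filter_le _ _).trans_eq (card_fin N)

theorem numZeros_eq_zero_iff {y : Fin N → Fin 2} : numZeros y = 0 ↔ y = allOnes N := by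
  simp only [numZeros, card_filter_eq_zero_iff, mem_univ, true_implies, funext_iff, allOnes]
  exact forall_congr' fun i => by omega

theorem numZeros_eq_iff {y : Fin N → Fin 2} : numZeros y = N ↔ y = allZeros N := by
  simp only [numZeros, ← card_fin N, card_filter_eq_iff, mem_univ, true_implies,
    funext_iff, allZeros]

theorem XN_apply (x y : Fin N → Fin 2) : XN N x y = if x = y + 1 then 1 else 0 := by
  simp only [XN, of_apply, funext_iff, Pi.add_apply, Pi.one_apply]
  exact if_congr (forall_congr' fun i => by omega) rfl rfl

theorem XN_mul_ketbra (y z : Fin N → Fin 2) : XN N * ketbra y z = ketbra (y + 1) z := by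
  ext x w
  by_cases hw : w = z
  · simp [ketbra, hw, mul_single_apply_same, XN_apply, single_apply, eq_comm]
  · simp [ketbra, mul_apply, Ne.symm hw]

theorem allOnes_add_one : allOnes N + 1 = allZeros N := by
  funext i; simp [allOnes, allZeros]

theorem allZeros_add_one : allZeros N + 1 = allOnes N := by
  funext i; simp [allOnes, allZeros]

theorem Dop_eq_diagonal (φ : ℝ) :
    Dop N φ = diagonal fun y => exp (I * φ) ^ (2 * (numZeros y : ℤ) - N) := by
  simp only [Dop, neg_mul, exp_neg, prod_ite_inv_eq_zpow (exp_ne_zero _), Fintype.card_fin]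
  rfl

noncomputable def zeta (N : ℕ) : ℂ := exp (2 * π * I / (2 * N + 2 : ℕ))

theorem isPrimitiveRoot_zeta (N : ℕ) : IsPrimitiveRoot (zeta N) (2 * N + 2) :=
  isPrimitiveRoot_exp _ (by omega)

theorem exp_I_mul_int_mul_pi_div_eq_zeta_pow (k : ℤ) (j : ℕ) :
    exp (I * k * j * π / (N + 1)) = (zeta N ^ k) ^ j := by
  rw [zeta, ← exp_int_mul, ← exp_nat_mul]
  congr 1
  push_cast
  field_simp

theorem exp_I_mul_pi_div_eq_zeta_pow (j : ℕ) : exp (I * ((j * π / (N + 1) : ℝ) : ℂ)) = zeta N ^ j := by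
  rw [zeta, ← exp_nat_mul]
  congr 1
  push_cast
  field_simp

theorem Dop_mul_pi_div (j : ℕ) :
    Dop N (j * π / (N + 1)) = diagonal fun y => (zeta N ^ (2 * (numZeros y : ℤ) - N)) ^ j := by
  rw [Dop_eq_diagonal, exp_I_mul_pi_div_eq_zeta_pow]
  congr! 2 with y
  rw [← zpow_natCast, ← zpow_natCast, ← _root_.zpow_mul, ← _root_.zpow_mul, mul_comm]

theorem fourier_coeff_zeta (q e : ℤ) :
    (2 * ((N : ℂ) + 1))⁻¹ * ∑ j ∈ range (2 * N + 2), (zeta N ^ q) ^ j * (zeta N ^ e) ^ j =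
      if ((2 * N + 2 : ℕ) : ℤ) ∣ q + e then 1 else 0 := by
  have hζ := isPrimitiveRoot_zeta N
  simp only [← mul_pow, ← zpow_add₀ (hζ.ne_zero (by omega)), hζ.geom_sum_zpow]
  split_ifs
  · push_cast
    field_simp
  · rw [mul_zero]

theorem Iq_eq_XN_mul_diagonal (q : ℤ) :
    Iq N q = XN N * diagonal fun y =>
      if ((2 * N + 2 : ℕ) : ℤ) ∣ q + (2 * numZeros y - N) then 1 else 0 := by
  unfold Iq
  simp only [← Matrix.mul_smul, ← Matrix.mul_sum, Dop_mul_pi_div]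
  congr 1
  ext y w
  rcases eq_or_ne y w with rfl | hyw
  · simp only [Matrix.smul_apply, Matrix.sum_apply, diagonal_apply_eq, smul_eq_mul,
      exp_I_mul_int_mul_pi_div_eq_zeta_pow]
    exact fourier_coeff_zeta q _
  · simp [Matrix.sum_apply, diagonal_apply_ne _ hyw]

theorem diagonal_indicator_eq_ketbra {z : Fin N → Fin 2} {P : (Fin N → Fin 2) → Prop}
    [DecidablePred P] (h : ∀ y, P y ↔ y = z) :
    (diagonal fun y => if P y then (1 : ℂ) else 0) = ketbra z z := by
  rw [ketbra, ← diagonal_single]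
  congr 1
  funext y
  rw [Pi.single_apply]
  exact if_congr (h y) rfl rfl

theorem dvd_natCast_add_iff (y : Fin N → Fin 2) :
    ((2 * N + 2 : ℕ) : ℤ) ∣ N + (2 * numZeros y - N) ↔ y = allOnes N := by
  have hle := numZeros_le y
  rw [← numZeros_eq_zero_iff]
  refine ⟨fun h => ?_, fun h => by simp [h]⟩
  have := Int.eq_zero_of_abs_lt_dvd h (abs_lt.mpr ⟨by omega, by omega⟩)
  omega

theorem dvd_neg_natCast_add_iff (y : Fin N → Fin 2) :
    ((2 * N + 2 : ℕ) : ℤ) ∣ -N + (2 * numZeros y - N) ↔ y = allZeros N := by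
  have hle := numZeros_le y
  rw [← numZeros_eq_iff]
  refine ⟨fun h => ?_, fun h => ⟨0, by rw [h]; ring⟩⟩
  have := Int.eq_zero_of_abs_lt_dvd h (abs_lt.mpr ⟨by omega, by omega⟩)
  omega

theorem Iq_natCast : Iq N N = ketbra (allZeros N) (allOnes N) := by
  rw [Iq_eq_XN_mul_diagonal, diagonal_indicator_eq_ketbra dvd_natCast_add_iff, XN_mul_ketbra,
    allOnes_add_one]

theorem Iq_neg_natCast : Iq N (-N) = ketbra (allOnes N) (allZeros N) := by
  rw [Iq_eq_XN_mul_diagonal, diagonal_indicator_eq_ketbra dvd_neg_natCast_add_iff,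
    XN_mul_ketbra, allZeros_add_one]

end GHZ

open GHZ in
theorem coherence_from_fourier_components_general (N : ℕ) :
    chi N = Iq N N + Iq N (-(N : ℤ)) := by
  rw [Iq_natCast, Iq_neg_natCast]
  rfl

open GHZ in
/-- χ = I_N + I_{-N}. -/
theorem coherence_from_fourier_components (N : ℕ) (hN : 1 ≤ N) :
    chi N = Iq N N + Iq N (-(N : ℤ)) :=
  coherence_from_fourier_components_general N
end
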